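/- arXiv:2304.14786 — 3 statements merged into one kernel-verified Lean document; each statement's English description precedes it below -/
import Mathlib

section
/- Let π: [a,b] → ℝ≥0 satisfy |π(x) - π(y)| ≤ L‖x-y‖_∞^β on the box [a,b] ⊂ ℝ^s with z := ∫ π > 0, and let φ_m be its tensor-product hat function interpolant on the equispaced grid with resolution m = (m_1,...,m_s), with c := ∫ φ_m. Then ∫_{[a,b]} |π(x)/z - φ_m(x)/c| dx ≤ 2(L/z) ∏_{j=1}^s (b_j - a_j) · max_j ((b_j - a_j)/m_j)^β. -/
open MeasureTheory

/-- Equispaced grid point `y_ℓ = a + ℓ (b-a)/m`. -/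
noncomputable def gridPt (a b : ℝ) (m : ℕ) (ℓ : ℕ) : ℝ := a + ℓ * (b - a) / m

/-- The piecewise linear hat function `h_{ℓ,m}` on `[a,b]`. -/
noncomputable def hat (a b : ℝ) (m : ℕ) (ℓ : ℕ) (x : ℝ) : ℝ :=
  if ℓ = 0 then
    (if gridPt a b m 0 ≤ x ∧ x ≤ gridPt a b m 1 then (gridPt a b m 1 - x) * m / (b - a) else 0)
  else if ℓ = m then
    (if gridPt a b m (m - 1) ≤ x ∧ x ≤ gridPt a b m m then
      (x - gridPt a b m (m - 1)) * m / (b - a) else 0)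
  else
    (if gridPt a b m (ℓ - 1) ≤ x ∧ x ≤ gridPt a b m ℓ then
        (x - gridPt a b m (ℓ - 1)) * m / (b - a)
      else if gridPt a b m ℓ ≤ x ∧ x ≤ gridPt a b m (ℓ + 1) then
        (gridPt a b m (ℓ + 1) - x) * m / (b - a)
      else 0)

/-- The tensor-product hat function interpolant `φ_m`. -/
noncomputable def hatInterp (s : ℕ) (a b : Fin s → ℝ) (m : Fin s → ℕ)
    (π : (Fin s → ℝ) → ℝ) (x : Fin s → ℝ) : ℝ :=
  ∑ ℓ : (∀ j, Fin (m j + 1)),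
    π (fun j => gridPt (a j) (b j) (m j) (ℓ j)) * ∏ j, hat (a j) (b j) (m j) (ℓ j) (x j)

/-!
The tensor-product hat functions form a nonnegative partition of unity on the box, and
`h_{ℓ,m}(x) ≠ 0` forces `|x_j - y_{ℓ,j}| ≤ (b_j - a_j)/m_j` in every coordinate. Hence
`π(x) - φ_m(x)` is a convex combination of differences `π(x) - π(y_ℓ)` with
`‖x - y_ℓ‖_∞ ≤ max_j (b_j - a_j)/m_j`, so `|π - φ_m| ≤ L max_j ((b_j - a_j)/m_j)^β` pointwise.
Integrating over the box gives the `L¹` bound, and normalizing costs a factor `2/z`, since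
`|c - z| ≤ ∫ |π - φ_m|`.
-/

lemma abs_sub_sum_mul_le_of_sum_eq_one {ι : Type*} (t : Finset ι) {u C : ℝ} {v w : ι → ℝ}
    (hw0 : ∀ i ∈ t, 0 ≤ w i) (hw1 : ∑ i ∈ t, w i = 1)
    (hC : ∀ i ∈ t, w i ≠ 0 → |u - v i| ≤ C) :
    |u - ∑ i ∈ t, v i * w i| ≤ C := by
  have hsum : u - ∑ i ∈ t, v i * w i = ∑ i ∈ t, (u - v i) * w i := by
    simp only [sub_mul, Finset.sum_sub_distrib, ← Finset.mul_sum, hw1, mul_one]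
  calc |u - ∑ i ∈ t, v i * w i| ≤ ∑ i ∈ t, |u - v i| * w i := by
        rw [hsum]
        refine (Finset.abs_sum_le_sum_abs _ _).trans_eq (Finset.sum_congr rfl fun i hi => ?_)
        rw [abs_mul, abs_of_nonneg (hw0 i hi)]
    _ ≤ ∑ i ∈ t, C * w i := by
        refine Finset.sum_le_sum fun i hi => ?_
        rcases eq_or_ne (w i) 0 with h | h
        · simp [h]
        · exact mul_le_mul_of_nonneg_right (hC i hi h) (hw0 i hi)
    _ = C := by rw [← Finset.mul_sum, hw1, mul_one]

lemma dist_rpow_le_iSup_rpow {ι : Type*} [Fintype ι] {x y δ : ι → ℝ} {β : ℝ} (hβ : 0 < β)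
    (h : ∀ j, |x j - y j| ≤ δ j) : dist x y ^ β ≤ ⨆ j, δ j ^ β := by
  have hδ : ∀ j, 0 ≤ δ j := fun j => (abs_nonneg _).trans (h j)
  have hS : 0 ≤ ⨆ j, δ j ^ β := Real.iSup_nonneg fun j => Real.rpow_nonneg (hδ j) β
  rw [← Real.le_rpow_inv_iff_of_pos dist_nonneg hS hβ]
  refine (dist_pi_le_iff (by positivity)).2 fun j => ?_
  rw [Real.dist_eq, Real.le_rpow_inv_iff_of_pos (abs_nonneg _) hS hβ]
  exact (Real.rpow_le_rpow (abs_nonneg _) (h j) hβ.le).trans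
    (le_ciSup (f := fun j => δ j ^ β) (Set.finite_range _).bddAbove j)

theorem integral_abs_div_integral_sub_div_integral_le {α : Type*} [MeasurableSpace α]
    {μ : Measure α} {f g : α → ℝ} (hf : Integrable f μ) (hg : Integrable g μ)
    (hg0 : 0 ≤ᵐ[μ] g) (hz : 0 < ∫ x, f x ∂μ) (hc : 0 < ∫ x, g x ∂μ) :
    ∫ x, |f x / ∫ x, f x ∂μ - g x / ∫ x, g x ∂μ| ∂μ ≤
      2 / (∫ x, f x ∂μ) * ∫ x, |f x - g x| ∂μ := by
  set z := ∫ x, f x ∂μ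
  set c := ∫ x, g x ∂μ
  set I := ∫ x, |f x - g x| ∂μ
  have hcz : |c - z| ≤ I := by
    rw [← integral_sub hg hf]
    refine abs_integral_le_integral_abs.trans_eq (integral_congr_ae ?_)
    exact Filter.Eventually.of_forall fun x => abs_sub_comm _ _
  have hpt : ∀ᵐ x ∂μ, |f x / z - g x / c| ≤ |f x - g x| / z + |c - z| / (z * c) * g x := by
    filter_upwards [hg0] with x hx
    have hsplit : f x / z - g x / c = (f x - g x) / z + (c - z) / (z * c) * g x := by
      field_simp; ring
    rw [hsplit]
    refine (abs_add_le _ _).trans_eq ?_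
    rw [abs_div, abs_of_pos hz, abs_mul, abs_div, abs_of_pos (mul_pos hz hc),
      abs_of_nonneg hx]
  have hfg : Integrable (fun x => |f x - g x| / z) μ := (hf.sub hg).abs.div_const z
  calc ∫ x, |f x / z - g x / c| ∂μ
      ≤ ∫ x, (|f x - g x| / z + |c - z| / (z * c) * g x) ∂μ :=
        integral_mono_ae ((hf.div_const z).sub (hg.div_const c)).abs
          (hfg.add (hg.const_mul _)) hpt
    _ = (I + |c - z|) / z := by
        rw [integral_add hfg (hg.const_mul _), integral_div, integral_const_mul]
        change I / z + |c - z| / (z * c) * c = _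
        field_simp
    _ ≤ (I + I) / z := by gcongr
    _ = 2 / z * I := by ring

section Grid
variable {a b : ℝ} {m : ℕ}

lemma gridPt_zero : gridPt a b m 0 = a := by simp [gridPt]

lemma gridPt_self (hm : 0 < m) : gridPt a b m m = b := by
  rw [gridPt, mul_div_cancel_left₀ _ (Nat.cast_ne_zero.mpr hm.ne')]
  ring

lemma gridPt_succ_sub (hm : 0 < m) (ℓ : ℕ) :
    gridPt a b m (ℓ + 1) - gridPt a b m ℓ = (b - a) / m := by
  have : (m : ℝ) ≠ 0 := Nat.cast_ne_zero.mpr hm.ne'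
  simp only [gridPt]
  push_cast
  field_simp
  ring

lemma gridPt_sub_pred (hm : 0 < m) {ℓ : ℕ} (hℓ : 0 < ℓ) :
    gridPt a b m ℓ - gridPt a b m (ℓ - 1) = (b - a) / m := by
  simpa [Nat.sub_add_cancel hℓ] using gridPt_succ_sub (a := a) (b := b) hm (ℓ - 1)

lemma gridPt_strictMono (hab : a < b) (hm : 0 < m) : StrictMono (gridPt a b m) := by
  intro k ℓ h
  have : (0 : ℝ) < b - a := sub_pos.2 hab
  have : (0 : ℝ) < m := Nat.cast_pos.2 hm
  simp only [gridPt]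
  gcongr

lemma gridPt_mem_Icc (hab : a < b) (hm : 0 < m) {ℓ : ℕ} (hℓ : ℓ ≤ m) :
    gridPt a b m ℓ ∈ Set.Icc a b := by
  have hmono := (gridPt_strictMono hab hm).monotone
  refine ⟨?_, ?_⟩
  · simpa only [gridPt_zero] using hmono (Nat.zero_le ℓ)
  · simpa only [gridPt_self hm] using hmono hℓ

lemma exists_cell_of_mem_Icc (u : ℕ → ℝ) {x : ℝ} (h0 : u 0 ≤ x) :
    ∀ n, x ≤ u (n + 1) → ∃ k ≤ n, u k ≤ x ∧ x ≤ u (k + 1)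
  | 0, h => ⟨0, le_rfl, h0, h⟩
  | n + 1, h => by
    by_cases hn : x ≤ u (n + 1)
    · obtain ⟨k, hk, hxk⟩ := exists_cell_of_mem_Icc u h0 n hn
      exact ⟨k, hk.trans n.le_succ, hxk⟩
    · exact ⟨n + 1, le_rfl, le_of_not_ge hn, h⟩

end Grid

section Hat
variable {a b : ℝ} {m : ℕ}

lemma hat_nonneg (hab : a < b) (ℓ : ℕ) (x : ℝ) : 0 ≤ hat a b m ℓ x := by
  have hba : 0 ≤ b - a := (sub_pos.2 hab).le
  unfold hat
  split_ifs <;>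
    first
    | exact le_rfl
    | exact div_nonneg (mul_nonneg (by linarith [‹_ ∧ _›.1, ‹_ ∧ _›.2]) m.cast_nonneg) hba

lemma hat_measurable (a b : ℝ) (m ℓ : ℕ) : Measurable (hat a b m ℓ) := by
  have hIcc : ∀ c d : ℝ, MeasurableSet {x : ℝ | c ≤ x ∧ x ≤ d} := fun _ _ => measurableSet_Icc
  unfold hat
  split_ifs
  · exact Measurable.ite (hIcc _ _) (by fun_prop) (by fun_prop)
  · exact Measurable.ite (hIcc _ _) (by fun_prop) (by fun_prop)
  · exact Measurable.ite (hIcc _ _) (by fun_prop)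
      (Measurable.ite (hIcc _ _) (by fun_prop) (by fun_prop))

lemma abs_sub_gridPt_le_of_hat_ne_zero (hm : 0 < m) {ℓ : ℕ} {x : ℝ}
    (h : hat a b m ℓ x ≠ 0) : |x - gridPt a b m ℓ| ≤ (b - a) / m := by
  unfold hat at h
  rw [abs_le]
  split_ifs at h with h₀ hx h₁ hx hx hx'
  all_goals try exact absurd rfl h
  · have := gridPt_succ_sub (a := a) (b := b) hm 0
    subst h₀
    constructor <;> linarith [hx.1, hx.2]
  · have := gridPt_sub_pred (a := a) (b := b) hm hm
    subst h₁
    constructor <;> linarith [hx.1, hx.2]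
  · have := gridPt_sub_pred (a := a) (b := b) hm (Nat.pos_of_ne_zero h₀)
    constructor <;> linarith [hx.1, hx.2]
  · have := gridPt_succ_sub (a := a) (b := b) hm ℓ
    constructor <;> linarith [hx'.1, hx'.2]

lemma hat_eq_zero_of_gridPt_succ_le (hab : a < b) (hm : 0 < m) {ℓ : ℕ} {x : ℝ}
    (h : gridPt a b m (ℓ + 1) ≤ x) : hat a b m ℓ x = 0 := by
  have hlt := gridPt_strictMono hab hm
  unfold hat
  split_ifs with h₀ hx h₁ hx hx hx'
  all_goals try rfl
  · subst h₀
    rw [show gridPt a b m 1 - x = 0 by linarith [hx.2], zero_mul, zero_div]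
  · subst h₁
    linarith [hx.2, hlt ℓ.lt_succ_self]
  · linarith [hx.2, hlt ℓ.lt_succ_self]
  · rw [show gridPt a b m (ℓ + 1) - x = 0 by linarith [hx'.2], zero_mul, zero_div]

lemma hat_eq_zero_of_le_gridPt_pred (hab : a < b) (hm : 0 < m) {ℓ : ℕ} {x : ℝ} (hℓ : 0 < ℓ)
    (h : x ≤ gridPt a b m (ℓ - 1)) : hat a b m ℓ x = 0 := by
  unfold hat
  split_ifs with h₀ hx h₁ hx hx hx'
  all_goals try rfl
  · omega
  · subst h₁
    rw [show x - gridPt a b ℓ (ℓ - 1) = 0 by linarith [hx.1], zero_mul, zero_div]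
  · rw [show x - gridPt a b m (ℓ - 1) = 0 by linarith [hx.1], zero_mul, zero_div]
  · linarith [hx'.1, gridPt_strictMono hab hm (Nat.sub_one_lt_of_lt hℓ)]

lemma hat_of_mem_cell (hab : a < b) (hm : 0 < m) {k : ℕ} (hk : k < m) {x : ℝ}
    (hx₁ : gridPt a b m k ≤ x) (hx₂ : x ≤ gridPt a b m (k + 1)) :
    hat a b m k x = (gridPt a b m (k + 1) - x) * m / (b - a) := by
  unfold hat
  rcases Nat.eq_zero_or_pos k with rfl | hk₀
  · rw [if_pos rfl, if_pos ⟨hx₁, hx₂⟩]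
  rw [if_neg hk₀.ne', if_neg hk.ne]
  by_cases hxk : x ≤ gridPt a b m k
  -- at `x = y_k` the rising branch of the definition applies; it also takes the value `1`
  · have hx : x = gridPt a b m k := le_antisymm hxk hx₁
    have h₁ := gridPt_sub_pred (a := a) (b := b) hm hk₀
    have h₂ := gridPt_succ_sub (a := a) (b := b) hm k
    rw [if_pos ⟨(gridPt_strictMono hab hm (Nat.sub_one_lt_of_lt hk₀)).le.trans hx₁, hxk⟩,
      show x - gridPt a b m (k - 1) = gridPt a b m (k + 1) - x by rw [hx]; linarith]
  · rw [if_neg fun h => hxk h.2, if_pos ⟨hx₁, hx₂⟩]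

lemma hat_succ_of_mem_cell (hm : 0 < m) {k : ℕ} (hk : k < m) {x : ℝ}
    (hx₁ : gridPt a b m k ≤ x) (hx₂ : x ≤ gridPt a b m (k + 1)) :
    hat a b m (k + 1) x = (x - gridPt a b m k) * m / (b - a) := by
  unfold hat
  rw [if_neg k.succ_ne_zero]
  by_cases hkm : k + 1 = m
  · subst hkm
    rw [if_pos rfl, Nat.add_sub_cancel, if_pos ⟨hx₁, hx₂⟩]
  · rw [if_neg hkm, Nat.add_sub_cancel, if_pos ⟨hx₁, hx₂⟩]

lemma sum_range_hat_eq_one (hab : a < b) (hm : 0 < m) {x : ℝ} (hx : x ∈ Set.Icc a b) :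
    ∑ ℓ ∈ Finset.range (m + 1), hat a b m ℓ x = 1 := by
  have hmono := gridPt_strictMono hab hm
  obtain ⟨k, hk, hx₁, hx₂⟩ := exists_cell_of_mem_Icc (gridPt a b m) (x := x)
    (by rw [gridPt_zero]; exact hx.1) (m - 1)
    (by rw [Nat.sub_add_cancel hm, gridPt_self hm]; exact hx.2)
  replace hk : k < m := by omega
  have hvanish : ∀ ℓ ∈ Finset.range (m + 1), ℓ ≠ k ∧ ℓ ≠ k + 1 → hat a b m ℓ x = 0 := by
    rintro ℓ - ⟨hℓk, hℓk'⟩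
    rcases lt_or_gt_of_ne hℓk with hlt | hgt
    · exact hat_eq_zero_of_gridPt_succ_le hab hm ((hmono.monotone (by omega)).trans hx₁)
    · exact hat_eq_zero_of_le_gridPt_pred hab hm (by omega)
        (hx₂.trans (hmono.monotone (by omega)))
  rw [Finset.sum_eq_add_of_mem k (k + 1) (Finset.mem_range.2 (by omega))
    (Finset.mem_range.2 (by omega)) k.succ_ne_self.symm
    hvanish, hat_of_mem_cell hab hm hk hx₁ hx₂, hat_succ_of_mem_cell hm hk hx₁ hx₂, ← add_div,
    ← add_mul, sub_add_sub_cancel, gridPt_succ_sub hm,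
    div_mul_cancel₀ _ (Nat.cast_ne_zero.2 hm.ne'), div_self (sub_pos.2 hab).ne']

end Hat

section TensorHat
variable {ι : Type*} {a b : ι → ℝ} {m : ι → ℕ}

noncomputable def gridVec (a b : ι → ℝ) (m : ι → ℕ) (ℓ : ∀ j, Fin (m j + 1)) : ι → ℝ :=
  fun j => gridPt (a j) (b j) (m j) (ℓ j)

noncomputable def tensorHat [Fintype ι] (a b : ι → ℝ) (m : ι → ℕ) (ℓ : ∀ j, Fin (m j + 1))
    (x : ι → ℝ) : ℝ :=
  ∏ j, hat (a j) (b j) (m j) (ℓ j) (x j)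

lemma hatInterp_eq_sum_tensorHat (s : ℕ) (a b : Fin s → ℝ) (m : Fin s → ℕ)
    (π : (Fin s → ℝ) → ℝ) (x : Fin s → ℝ) :
    hatInterp s a b m π x = ∑ ℓ, π (gridVec a b m ℓ) * tensorHat a b m ℓ x :=
  rfl

lemma gridVec_mem_Icc (hab : ∀ j, a j < b j) (hm : ∀ j, 0 < m j) (ℓ : ∀ j, Fin (m j + 1)) :
    gridVec a b m ℓ ∈ Set.Icc a b :=
  ⟨fun j => (gridPt_mem_Icc (hab j) (hm j) (ℓ j).is_le).1,
    fun j => (gridPt_mem_Icc (hab j) (hm j) (ℓ j).is_le).2⟩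

lemma tensorHat_nonneg [Fintype ι] (hab : ∀ j, a j < b j) (ℓ : ∀ j, Fin (m j + 1))
    (x : ι → ℝ) : 0 ≤ tensorHat a b m ℓ x :=
  Finset.prod_nonneg fun j _ => hat_nonneg (hab j) _ _

lemma measurable_tensorHat [Fintype ι] (a b : ι → ℝ) (m : ι → ℕ) (ℓ : ∀ j, Fin (m j + 1)) :
    Measurable (tensorHat a b m ℓ) :=
  Finset.measurable_prod _ fun j _ => (hat_measurable _ _ _ _).comp (measurable_pi_apply j)

lemma sum_tensorHat_eq_one [Fintype ι] [DecidableEq ι] (hab : ∀ j, a j < b j)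
    (hm : ∀ j, 0 < m j) {x : ι → ℝ} (hx : x ∈ Set.Icc a b) :
    ∑ ℓ, tensorHat a b m ℓ x = 1 := by
  have hfactor : ∀ j, ∑ ℓ : Fin (m j + 1), hat (a j) (b j) (m j) ℓ (x j) = 1 := fun j => by
    rw [Fin.sum_univ_eq_sum_range (fun ℓ => hat (a j) (b j) (m j) ℓ (x j))]
    exact sum_range_hat_eq_one (hab j) (hm j) ⟨hx.1 j, hx.2 j⟩
  rw [← Finset.prod_eq_one fun j _ => hfactor j]
  exact (Fintype.prod_sum fun j (ℓ : Fin (m j + 1)) => hat (a j) (b j) (m j) ℓ (x j)).symm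

lemma tensorHat_le_one [Fintype ι] [DecidableEq ι] (hab : ∀ j, a j < b j) (hm : ∀ j, 0 < m j)
    (ℓ : ∀ j, Fin (m j + 1)) {x : ι → ℝ} (hx : x ∈ Set.Icc a b) : tensorHat a b m ℓ x ≤ 1 :=
  (sum_tensorHat_eq_one hab hm hx) ▸
    Finset.single_le_sum (fun ℓ _ => tensorHat_nonneg hab ℓ x) (Finset.mem_univ ℓ)

lemma abs_sub_gridVec_le_of_tensorHat_ne_zero [Fintype ι] (hm : ∀ j, 0 < m j)
    {ℓ : ∀ j, Fin (m j + 1)} {x : ι → ℝ} (h : tensorHat a b m ℓ x ≠ 0) (j : ι) :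
    |x j - gridVec a b m ℓ j| ≤ (b j - a j) / m j :=
  abs_sub_gridPt_le_of_hat_ne_zero (hm j) (Finset.prod_ne_zero_iff.1 h j (Finset.mem_univ j))

lemma integrableOn_tensorHat [Fintype ι] [DecidableEq ι] (hab : ∀ j, a j < b j)
    (hm : ∀ j, 0 < m j) (ℓ : ∀ j, Fin (m j + 1)) :
    IntegrableOn (tensorHat a b m ℓ) (Set.Icc a b) := by
  refine Measure.integrableOn_of_bounded (M := 1) isCompact_Icc.measure_lt_top.ne
    (measurable_tensorHat a b m ℓ).aestronglyMeasurable ?_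
  filter_upwards [ae_restrict_mem measurableSet_Icc] with x hx
  rw [Real.norm_of_nonneg (tensorHat_nonneg hab ℓ x)]
  exact tensorHat_le_one hab hm ℓ hx

end TensorHat

section HatInterp
variable {s : ℕ} {a b : Fin s → ℝ} {m : Fin s → ℕ} {π : (Fin s → ℝ) → ℝ}

lemma hatInterp_nonneg (hab : ∀ j, a j < b j) (hm : ∀ j, 0 < m j)
    (hπ0 : ∀ x ∈ Set.Icc a b, 0 ≤ π x) (x : Fin s → ℝ) : 0 ≤ hatInterp s a b m π x :=
  Finset.sum_nonneg fun ℓ _ =>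
    mul_nonneg (hπ0 _ (gridVec_mem_Icc hab hm ℓ)) (tensorHat_nonneg hab ℓ x)

lemma integrableOn_hatInterp (hab : ∀ j, a j < b j) (hm : ∀ j, 0 < m j) :
    IntegrableOn (hatInterp s a b m π) (Set.Icc a b) := by
  simp only [funext (hatInterp_eq_sum_tensorHat s a b m π)]
  exact integrable_finsetSum _ fun ℓ _ => (integrableOn_tensorHat hab hm ℓ).const_mul _

lemma abs_sub_hatInterp_le (hab : ∀ j, a j < b j) (hm : ∀ j, 0 < m j) {L β : ℝ}
    (hL : 0 ≤ L) (hβ : 0 < β)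
    (hHolder : ∀ x ∈ Set.Icc a b, ∀ y ∈ Set.Icc a b, |π x - π y| ≤ L * dist x y ^ β)
    {x : Fin s → ℝ} (hx : x ∈ Set.Icc a b) :
    |π x - hatInterp s a b m π x| ≤ L * ⨆ j, ((b j - a j) / m j) ^ β := by
  rw [hatInterp_eq_sum_tensorHat]
  refine abs_sub_sum_mul_le_of_sum_eq_one _ (fun ℓ _ => tensorHat_nonneg hab ℓ x)
    (sum_tensorHat_eq_one hab hm hx) fun ℓ _ hℓ => ?_
  exact (hHolder x hx _ (gridVec_mem_Icc hab hm ℓ)).trans <| mul_le_mul_of_nonneg_left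
    (dist_rpow_le_iSup_rpow hβ (abs_sub_gridVec_le_of_tensorHat_ne_zero hm hℓ)) hL

lemma integral_abs_sub_hatInterp_le (hab : ∀ j, a j < b j) (hm : ∀ j, 0 < m j) {L β : ℝ}
    (hL : 0 ≤ L) (hβ : 0 < β)
    (hHolder : ∀ x ∈ Set.Icc a b, ∀ y ∈ Set.Icc a b, |π x - π y| ≤ L * dist x y ^ β) :
    ∫ x in Set.Icc a b, |π x - hatInterp s a b m π x| ≤
      L * (⨆ j, ((b j - a j) / m j) ^ β) * ∏ j, (b j - a j) := by
  refine (le_abs_self _).trans ?_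
  rw [← Real.norm_eq_abs, ← Real.volume_Icc_pi_toReal fun j => (hab j).le]
  refine norm_setIntegral_le_of_norm_le_const isCompact_Icc.measure_lt_top fun x hx => ?_
  rw [Real.norm_of_nonneg (abs_nonneg _)]
  exact abs_sub_hatInterp_le hab hm hL hβ hHolder hx

end HatInterp

theorem normalized_hat_approx_L1_bound_general (s : ℕ)
    (a b : Fin s → ℝ) (hab : ∀ j, a j < b j) (m : Fin s → ℕ) (hm : ∀ j, 1 ≤ m j)
    (π : (Fin s → ℝ) → ℝ) (hπ0 : ∀ x ∈ Set.Icc a b, 0 ≤ π x)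
    (hπi : IntegrableOn π (Set.Icc a b))
    (L : ℝ) (hL : 0 < L) (β : ℝ) (hβ : 0 < β ∧ β ≤ 1)
    (hHolder : ∀ x ∈ Set.Icc a b, ∀ y ∈ Set.Icc a b, |π x - π y| ≤ L * dist x y ^ β)
    (z c : ℝ) (hz : z = ∫ x in Set.Icc a b, π x)
    (hc : c = ∫ x in Set.Icc a b, hatInterp s a b m π x)
    (hz0 : 0 < z) (hc0 : 0 < c) :
    (∫ x in Set.Icc a b, |π x / z - hatInterp s a b m π x / c|) ≤
      2 * (L / z) * (∏ j, (b j - a j)) * ⨆ j, ((b j - a j) / (m j : ℝ)) ^ β := by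
  subst hz hc
  calc (∫ x in Set.Icc a b, |π x / _ - hatInterp s a b m π x / _|)
      ≤ 2 / (∫ x in Set.Icc a b, π x) * ∫ x in Set.Icc a b, |π x - hatInterp s a b m π x| :=
        integral_abs_div_integral_sub_div_integral_le hπi (integrableOn_hatInterp hab hm)
          (ae_of_all _ (hatInterp_nonneg hab hm hπ0)) hz0 hc0
    _ ≤ 2 / (∫ x in Set.Icc a b, π x) *
          (L * (⨆ j, ((b j - a j) / (m j : ℝ)) ^ β) * ∏ j, (b j - a j)) := by
        gcongr
        exact integral_abs_sub_hatInterp_le hab hm hL.le hβ.1 hHolder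
    _ = _ := by ring

/-- `L¹` error of the normalized hat-function approximation of a Hölder continuous
density:  `∫ |π/z − φ_m/c| ≤ 2 (L/z) ∏_j (b_j − a_j) · max_j ((b_j − a_j)/m_j)^β`.
(The metric on `Fin s → ℝ` is the sup-metric, so `dist x y = ‖x - y‖_∞`.) -/
theorem normalized_hat_approx_L1_bound (s : ℕ) (hs : 1 ≤ s)
    (a b : Fin s → ℝ) (hab : ∀ j, a j < b j) (m : Fin s → ℕ) (hm : ∀ j, 1 ≤ m j)
    (π : (Fin s → ℝ) → ℝ) (hπ0 : ∀ x ∈ Set.Icc a b, 0 ≤ π x)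
    (hπi : IntegrableOn π (Set.Icc a b))
    (L : ℝ) (hL : 0 < L) (β : ℝ) (hβ : 0 < β ∧ β ≤ 1)
    (hHolder : ∀ x ∈ Set.Icc a b, ∀ y ∈ Set.Icc a b, |π x - π y| ≤ L * dist x y ^ β)
    (z c : ℝ) (hz : z = ∫ x in Set.Icc a b, π x)
    (hc : c = ∫ x in Set.Icc a b, hatInterp s a b m π x)
    (hz0 : 0 < z) (hc0 : 0 < c) :
    (∫ x in Set.Icc a b, |π x / z - hatInterp s a b m π x / c|) ≤
      2 * (L / z) * (∏ j, (b j - a j)) * ⨆ j, ((b j - a j) / (m j : ℝ)) ^ β :=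
  normalized_hat_approx_L1_bound_general s a b hab m hm π hπ0 hπi L hL β hβ hHolder z c hz hc hz0
    hc0
end

section
/- Under the greedy allocation of sample sizes N_k = ⌊N c_k / c⌋ for k ∈ L_δ* and N_{k_r} = N − Σ_{k ∈ L_δ*} N_k, one has Σ_{k ∈ L_δ} |c_k/c − N_k/N| ≤ (δ + 2(r−1))/N. -/
/-!
Write `p v = c_v / c` and `e v = p v - ⌊N p v⌋ / N ∈ [0, 1/N]` for the rounding error of a floored
entry. The last entry, of index `s = r - 1`, absorbs all the rounding: its error is `(∑_{v ≤ s} p v - 1) - ∑_{v < s} e v`,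
where the first bracket lies in `[-δ/N, 0]` by the choice of `r` and the second in `[0, s/N]`.
-/

open Finset

/-- `s` is the index of the last entry, `k_r` in the paper. -/
noncomputable def greedyAlloc (N : ℕ) (p : ℕ → ℝ) (s v : ℕ) : ℤ :=
  if v = s then N - ∑ w ∈ range s, ⌊N * p w⌋ else ⌊N * p v⌋

lemma sub_floor_mul_div_nonneg {a : ℝ} (ha : 0 < a) (x : ℝ) : 0 ≤ x - ⌊a * x⌋ / a := by
  rw [sub_nonneg, div_le_iff₀ ha, mul_comm]
  exact Int.floor_le _

lemma sub_floor_mul_div_le {a : ℝ} (ha : 0 < a) (x : ℝ) : x - ⌊a * x⌋ / a ≤ 1 / a := by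
  rw [sub_le_iff_le_add, ← add_div, le_div_iff₀ ha, mul_comm]
  linarith [Int.lt_floor_add_one (a * x)]

lemma sum_range_sub_floor_mul_div_le {a : ℝ} (ha : 0 < a) (p : ℕ → ℝ) (s : ℕ) :
    ∑ v ∈ range s, (p v - ⌊a * p v⌋ / a) ≤ s / a :=
  calc _ ≤ ∑ _v ∈ range s, 1 / a := sum_le_sum fun v _ => sub_floor_mul_div_le ha _
    _ = s / a := by simp [div_eq_mul_inv]

section GreedyAlloc

variable {N : ℕ} (p : ℕ → ℝ) (s : ℕ)

lemma sum_abs_sub_greedyAlloc_floored_le (hN : (0 : ℝ) < N) :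
    ∑ v ∈ range s, |p v - greedyAlloc N p s v / N| ≤ s / N := by
  have herr : ∀ v ∈ range s, |p v - greedyAlloc N p s v / N| = p v - ⌊N * p v⌋ / N := by
    intro v hv
    rw [greedyAlloc, if_neg (mem_range.mp hv).ne, abs_of_nonneg (sub_floor_mul_div_nonneg hN _)]
  rw [sum_congr rfl herr]
  exact sum_range_sub_floor_mul_div_le hN p s

lemma abs_sub_greedyAlloc_last_le (hN : (0 : ℝ) < N) {ε : ℝ} (hlow : 1 - ε ≤ ∑ v ∈ range (s + 1), p v)
    (hup : ∑ v ∈ range (s + 1), p v ≤ 1) :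
    |p s - greedyAlloc N p s s / N| ≤ ε + s / N := by
  have hsplit : p s - greedyAlloc N p s s / N = (∑ v ∈ range (s + 1), p v - 1)
      - ∑ v ∈ range s, (p v - ⌊N * p v⌋ / N) := by
    rw [greedyAlloc, if_pos rfl, sum_range_succ, sum_sub_distrib, ← sum_div]
    push_cast
    field_simp
    ring
  have hround_nonneg : 0 ≤ ∑ v ∈ range s, (p v - ⌊N * p v⌋ / N) :=
    sum_nonneg fun v _ => sub_floor_mul_div_nonneg hN _
  have hround_le := sum_range_sub_floor_mul_div_le hN p s
  rw [hsplit, abs_le]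
  constructor <;> linarith

lemma sum_abs_sub_greedyAlloc_le (hN : (0 : ℝ) < N) {ε : ℝ} (hlow : 1 - ε ≤ ∑ v ∈ range (s + 1), p v)
    (hup : ∑ v ∈ range (s + 1), p v ≤ 1) :
    ∑ v ∈ range (s + 1), |p v - greedyAlloc N p s v / N| ≤ ε + 2 * s / N := by
  rw [sum_range_succ, mul_div_assoc, two_mul]
  linarith [sum_abs_sub_greedyAlloc_floored_le p s hN, abs_sub_greedyAlloc_last_le p s hN hlow hup]

end GreedyAlloc

theorem greedy_allocation_dioph_general (M : ℕ) (cc : ℕ → ℝ)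
    (hnn : ∀ v < M, 0 ≤ cc v)
    (c : ℝ) (hsum : ∑ v ∈ Finset.range M, cc v = c) (hc : 0 < c)
    (N : ℕ) (hN : 2 ≤ N) (δ : ℝ)
    (r : ℕ) (hr1 : 1 ≤ r) (hrM : r ≤ M)
    (hr : 1 - δ / N ≤ ∑ v ∈ Finset.range r, cc v / c)
    (Nk : ℕ → ℤ)
    (hNk : ∀ v, Nk v = if v = r - 1 then
        (N : ℤ) - ∑ w ∈ Finset.range (r - 1), ⌊(N : ℝ) * cc w / c⌋
      else ⌊(N : ℝ) * cc v / c⌋) :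
    ∑ v ∈ Finset.range r, |cc v / c - (Nk v : ℝ) / N| ≤ (δ + 2 * ((r : ℝ) - 1)) / N := by
  obtain ⟨s, rfl⟩ : ∃ s, r = s + 1 := ⟨r - 1, by omega⟩
  have hNk_alloc : Nk = greedyAlloc N (fun v => cc v / c) s := by
    funext v
    simp only [hNk, greedyAlloc, Nat.add_sub_cancel, mul_div_assoc]
  have htotal : ∑ v ∈ range M, cc v / c = 1 := by rw [← sum_div, hsum, div_self hc.ne']
  have hup : ∑ v ∈ range (s + 1), cc v / c ≤ 1 := htotal ▸
    sum_le_sum_of_subset_of_nonneg (range_subset_range.mpr hrM)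
      fun v hv _ => div_nonneg (hnn v (mem_range.mp hv)) hc.le
  rw [hNk_alloc]
  calc _ ≤ δ / N + 2 * s / N :=
        sum_abs_sub_greedyAlloc_le (fun v => cc v / c) s (Nat.cast_pos.mpr (by omega)) hr hup
    _ = (δ + 2 * (((s + 1 : ℕ) : ℝ) - 1)) / N := by push_cast; ring

/-- Diophantine approximation property of the greedy sample-size allocation:
with `N_v = ⌊N c_v / c⌋` for `v < r - 1` and `N_{r-1} = N − ∑_{v<r-1} N_v`, one has
`∑_{v<r} |c_v/c − N_v/N| ≤ (δ + 2(r−1))/N`. -/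
theorem greedy_allocation_dioph (M : ℕ) (cc : ℕ → ℝ)
    (hnn : ∀ v < M, 0 ≤ cc v)
    (hdec : ∀ v w, v ≤ w → w < M → cc w ≤ cc v)
    (c : ℝ) (hsum : ∑ v ∈ Finset.range M, cc v = c) (hc : 0 < c)
    (N : ℕ) (hN : 2 ≤ N) (δ : ℝ) (hδ : 0 < δ ∧ δ < N)
    (r : ℕ) (hr1 : 1 ≤ r) (hrM : r ≤ M)
    (hr : 1 - δ / N ≤ ∑ v ∈ Finset.range r, cc v / c)
    (hrmin : ∀ r' < r, ∑ v ∈ Finset.range r', cc v / c < 1 - δ / N)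
    (Nk : ℕ → ℤ)
    (hNk : ∀ v, Nk v = if v = r - 1 then
        (N : ℤ) - ∑ w ∈ Finset.range (r - 1), ⌊(N : ℝ) * cc w / c⌋
      else ⌊(N : ℝ) * cc v / c⌋) :
    ∑ v ∈ Finset.range r, |cc v / c - (Nk v : ℝ) / N| ≤ (δ + 2 * ((r : ℝ) - 1)) / N :=
  greedy_allocation_dioph_general M cc hnn c hsum hc N hN δ r hr1 hrM hr Nk hNk
end

section
/- With the greedy sample allocation N_k described below, one has Σ_{k ∈ L_δ} c_k / N_k ≤ c · (δ + 3r − 2)/N. -/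
/-! Every term but the last has `N_k = ⌊N c_k / c⌋ ≥ 1`, and `x < 2⌊x⌋` once `⌊x⌋ ≥ 1`, so
`c_k / N_k ≤ 2c/N`. The last allocation absorbs all rounding losses, so
`N_{k_r} ≥ N - Σ_{v<r} N c_{k_v}/c ≥ N c_{k_r}/c` and `c_{k_r}/N_{k_r} ≤ c/N`. Summing gives
`(2r - 1) c/N`, which is at most `c (δ + 3r - 2)/N`. -/

open Finset

theorem lt_two_mul_floor {α : Type*} [Ring α] [LinearOrder α] [IsStrictOrderedRing α]
    [FloorRing α] {x : α} (hx : 0 < ⌊x⌋) : x < 2 * ⌊x⌋ := by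
  have h1 : (1 : α) ≤ ⌊x⌋ := by exact_mod_cast hx
  calc x < ⌊x⌋ + 1 := Int.lt_floor_add_one x
    _ ≤ 2 * ⌊x⌋ := by rw [two_mul]; exact add_le_add_right h1 _

theorem div_floor_mul_div_le {a c N : ℝ} (hc : 0 < c) (hN : 0 < N)
    (hfloor : 0 < ⌊N * a / c⌋) : a / ⌊N * a / c⌋ ≤ 2 * c / N := by
  have hfloorR : (0 : ℝ) < ⌊N * a / c⌋ := by exact_mod_cast hfloor
  have hlt := lt_two_mul_floor hfloor
  rw [div_lt_iff₀ hc] at hlt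
  rw [div_le_div_iff₀ hfloorR hN]
  linarith

theorem sum_floor_mul_div_le {ι : Type*} (s : Finset ι) (b : ι → ℝ) (N c : ℝ) :
    ∑ w ∈ s, (⌊N * b w / c⌋ : ℝ) ≤ N * (∑ w ∈ s, b w) / c := by
  rw [mul_sum, sum_div]
  exact sum_le_sum fun w _ => Int.floor_le _

theorem mul_div_le_sub_sum_floor {ι : Type*} {s : Finset ι} {a c N : ℝ} {b : ι → ℝ}
    (hc : 0 < c) (hN : 0 ≤ N) (hmass : a + ∑ w ∈ s, b w ≤ c) :
    N * a / c ≤ N - ∑ w ∈ s, (⌊N * b w / c⌋ : ℝ) := by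
  have hrest : N * a / c + N * (∑ w ∈ s, b w) / c ≤ N := by
    rw [← add_div, ← mul_add, div_le_iff₀ hc]
    exact mul_le_mul_of_nonneg_left hmass hN
  linarith [sum_floor_mul_div_le s b N c]

theorem div_le_div_of_mul_div_le {a c N m : ℝ} (hc : 0 < c) (hN : 0 < N) (hm : 0 < m)
    (h : N * a / c ≤ m) : a / m ≤ c / N := by
  rw [div_le_iff₀ hc] at h
  rw [div_le_div_iff₀ hm hN]
  linarith

theorem greedy_allocation_ratio_bound_general (M : ℕ) (cc : ℕ → ℝ)
    (hnn : ∀ v < M, 0 ≤ cc v)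
    (c : ℝ) (hsum : ∑ v ∈ Finset.range M, cc v = c) (hc : 0 < c)
    (N : ℕ) (hN : 2 ≤ N) (δ : ℝ) (hδ : 0 < δ ∧ δ < N)
    (r : ℕ) (hr1 : 1 ≤ r) (hrM : r ≤ M)
    (Nk : ℕ → ℤ)
    (hNk : ∀ v, Nk v = if v = r - 1 then
        (N : ℤ) - ∑ w ∈ Finset.range (r - 1), ⌊(N : ℝ) * cc w / c⌋
      else ⌊(N : ℝ) * cc v / c⌋)
    (hNkpos : ∀ v < r, 0 < Nk v) :
    ∑ v ∈ Finset.range r, cc v / (Nk v : ℝ) ≤ c * (δ + 3 * (r : ℝ) - 2) / N := by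
  obtain ⟨s, rfl⟩ := Nat.exists_eq_add_one_of_ne_zero (Nat.one_le_iff_ne_zero.mp hr1)
  have hNpos : (0 : ℝ) < N := by exact_mod_cast (show 0 < N by omega)
  have hhead : ∀ v ∈ range s, cc v / (Nk v : ℝ) ≤ 2 * c / N := by
    intro v hv
    have hv : v < s := mem_range.mp hv
    have hfloor : Nk v = ⌊(N : ℝ) * cc v / c⌋ := by rw [hNk v, if_neg (by omega)]
    rw [hfloor]
    exact div_floor_mul_div_le hc hNpos (hfloor ▸ hNkpos v (by omega))
  have hlast : cc s / (Nk s : ℝ) ≤ c / N := by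
    have hmass : cc s + ∑ w ∈ range s, cc w ≤ c := by
      rw [add_comm, ← sum_range_succ, ← hsum]
      exact sum_le_sum_of_subset_of_nonneg (range_subset_range.mpr hrM)
        fun i hi _ => hnn i (mem_range.mp hi)
    have hcast : (Nk s : ℝ) = N - ∑ w ∈ range s, (⌊(N : ℝ) * cc w / c⌋ : ℝ) := by
      simp [hNk s]
    refine div_le_div_of_mul_div_le hc hNpos (by exact_mod_cast hNkpos s (by omega)) ?_
    rw [hcast]
    exact mul_div_le_sub_sum_floor hc hNpos.le hmass
  calc ∑ v ∈ range (s + 1), cc v / (Nk v : ℝ)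
      = ∑ v ∈ range s, cc v / (Nk v : ℝ) + cc s / (Nk s : ℝ) := sum_range_succ _ _
    _ ≤ s * (2 * c / N) + c / N := by
        have hb := sum_le_card_nsmul (range s) _ _ hhead
        rw [card_range, nsmul_eq_mul] at hb
        exact add_le_add hb hlast
    _ ≤ c * (δ + 3 * ((s + 1 : ℕ) : ℝ) - 2) / N := by
        rw [mul_div_assoc', ← add_div]
        gcongr
        push_cast
        linarith [mul_nonneg hc.le hδ.1.le, mul_nonneg hc.le (Nat.cast_nonneg (α := ℝ) s)]

/-- Bound for the sum `∑_{k ∈ L_δ} c_k / N_k` under the greedy sample-size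
allocation: `∑_{v<r} c_v / N_v ≤ c (δ + 3r − 2)/N`. -/
theorem greedy_allocation_ratio_bound (M : ℕ) (cc : ℕ → ℝ)
    (hnn : ∀ v < M, 0 ≤ cc v)
    (hdec : ∀ v w, v ≤ w → w < M → cc w ≤ cc v)
    (c : ℝ) (hsum : ∑ v ∈ Finset.range M, cc v = c) (hc : 0 < c)
    (N : ℕ) (hN : 2 ≤ N) (δ : ℝ) (hδ : 0 < δ ∧ δ < N)
    (r : ℕ) (hr1 : 1 ≤ r) (hrM : r ≤ M)
    (hr : 1 - δ / N ≤ ∑ v ∈ Finset.range r, cc v / c)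
    (hrmin : ∀ r' < r, ∑ v ∈ Finset.range r', cc v / c < 1 - δ / N)
    (Nk : ℕ → ℤ)
    (hNk : ∀ v, Nk v = if v = r - 1 then
        (N : ℤ) - ∑ w ∈ Finset.range (r - 1), ⌊(N : ℝ) * cc w / c⌋
      else ⌊(N : ℝ) * cc v / c⌋)
    (hNkpos : ∀ v < r, 0 < Nk v) :
    ∑ v ∈ Finset.range r, cc v / (Nk v : ℝ) ≤ c * (δ + 3 * (r : ℝ) - 2) / N :=
  greedy_allocation_ratio_bound_general M cc hnn c hsum hc N hN δ hδ r hr1 hrM Nk hNk hNkpos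
end
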